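/- arXiv:2505.05809 — 3 statements merged into one kernel-verified Lean document; each statement's English description precedes it below -/
import Mathlib

section
/- Let S = {b_1,...,b_m} be positive integers with sum 2T, m >= 20, such that no subset of indices sums to exactly T. In the 3-agent instance where agent 1 values g_1,...,g_m at T each, d_1 at 4T, d_2 at T, and agents 2 and 3 value g_i at b_i, d_1 at 5T, d_2 at (m-2)T, every EQ1 allocation A satisfies v_1(A_1) < (v_2(A_2) + v_3(A_3))/2. -/
/-!
Agents 2 and 3 (indices `1` and `2`; agent 1 is index `0`) share the valuation `w`, and the
`w`-values of the three bundles add up to `(m + 5) T`. If every good of agent 1 is worth at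
most `c` to her, EQ1 gives `v₁(A₁) ≤ w(Aᵢ) + c` for `i = 2, 3`, so the claim holds as soon as
`|w(A₂) - w(A₃)| > 2c`.

If `d₂` goes to agent 2 or 3, that bundle is worth at least `(m - 2) T` and the other one at
most `7T`; since `m ≥ 20` this gap exceeds `8T = 2 v₁(d₁)`. If `d₂` goes to agent 1, she
cannot also hold `d₁`: as `v₁(A₁) ≥ 5T`, EQ1 would force `w(A₂), w(A₃) ≥ T` while they sum to
at most `2T`, so the goods of `A₂` would have `b`-sum exactly `T`. Hence `d₁` lies with agent 2
or 3, `c = T`, and the gap is at least `5T - 2T`.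
-/

open Finset

/-- An allocation is a partition of the goods among the agents. -/
def isPartition {ι γ : Type*} [Fintype ι] [Fintype γ] [DecidableEq γ]
    (A : ι → Finset γ) : Prop :=
  (∀ i j, i ≠ j → Disjoint (A i) (A j)) ∧ Finset.univ.biUnion A = Finset.univ

/-- Additive value of a bundle. -/
def bundleVal {γ : Type*} (v : γ → ℚ) (S : Finset γ) : ℚ := ∑ g ∈ S, v g

/-- EQ1: for every pair of agents `i, j` with `A i` nonempty, some good can be
removed from `A i` so that `i`'s value drops to at most `j`'s value. -/
def EQ1 {ι γ : Type*} [DecidableEq γ] (v : ι → γ → ℚ) (A : ι → Finset γ) : Prop :=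
  ∀ i j, A i ≠ ∅ → ∃ g ∈ A i, bundleVal (v i) ((A i).erase g) ≤ bundleVal (v j) (A j)

/-- Valuations of the weak-NP-hardness reduction (Fig. 2): goods are
`g_1, …, g_m` (`Sum.inl`) plus `d_1 = Sum.inr 0` and `d_2 = Sum.inr 1`. -/
def vRed (m : ℕ) (T : ℤ) (b : Fin m → ℤ) : Fin 3 → (Fin m ⊕ Fin 2) → ℚ :=
  fun i g =>
    match g with
    | Sum.inl j => if i = 0 then (T : ℚ) else (b j : ℚ)
    | Sum.inr 0 => if i = 0 then 4 * (T : ℚ) else 5 * (T : ℚ)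
    | Sum.inr 1 => if i = 0 then (T : ℚ) else ((m : ℚ) - 2) * (T : ℚ)


section FairDivision

variable {ι γ : Type*}

lemma bundleVal_nonneg {v : γ → ℚ} (hv : ∀ g, 0 ≤ v g) (S : Finset γ) :
    0 ≤ bundleVal v S :=
  sum_nonneg fun g _ => hv g

lemma le_bundleVal_of_mem {v : γ → ℚ} (hv : ∀ g, 0 ≤ v g) {S : Finset γ} {g : γ}
    (hg : g ∈ S) : v g ≤ bundleVal v S :=
  single_le_sum (fun g _ => hv g) hg

lemma add_le_bundleVal_of_mem [DecidableEq γ] {v : γ → ℚ} (hv : ∀ g, 0 ≤ v g)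
    {S : Finset γ} {g g' : γ} (hne : g ≠ g') (hg : g ∈ S) (hg' : g' ∈ S) :
    v g + v g' ≤ bundleVal v S := by
  rw [← sum_pair hne]
  exact sum_le_sum_of_subset_of_nonneg (by simp [insert_subset_iff, hg, hg'])
    fun g _ _ => hv g

namespace isPartition

variable [Fintype ι] [Fintype γ] [DecidableEq γ] {A : ι → Finset γ}

lemma exists_mem (hA : isPartition A) (g : γ) : ∃ i, g ∈ A i := by
  have hg := mem_univ g
  rw [← hA.2, mem_biUnion] at hg
  simpa using hg

lemma notMem_of_mem (hA : isPartition A) {g : γ} {i j : ι} (hg : g ∈ A i) (hij : i ≠ j) :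
    g ∉ A j :=
  disjoint_left.mp (hA.1 i j hij) hg

lemma sum_bundleVal (hA : isPartition A) (v : γ → ℚ) :
    ∑ i, bundleVal v (A i) = ∑ g, v g := by
  rw [← hA.2, sum_biUnion fun i _ j _ hij => hA.1 i j hij]
  rfl

end isPartition

lemma EQ1.bundleVal_le_add [DecidableEq γ] {v : ι → γ → ℚ} {A : ι → Finset γ} (hA : EQ1 v A)
    {i j : ι} {c : ℚ} (hc : ∀ g ∈ A i, v i g ≤ c) (hc0 : 0 ≤ c) (hvj : ∀ g, 0 ≤ v j g) :
    bundleVal (v i) (A i) ≤ bundleVal (v j) (A j) + c := by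
  by_cases hAi : A i = ∅
  · rw [hAi, bundleVal, sum_empty]
    linarith [bundleVal_nonneg hvj (A j)]
  obtain ⟨g, hg, hle⟩ := hA i j hAi
  unfold bundleVal at hle ⊢
  rw [← sum_erase_add _ _ hg]
  linarith [hc g hg]

end FairDivision

lemma sub_le_abs_sub_of_ne_zero (x : Fin 3 → ℚ) {k : Fin 3} (hk : k ≠ 0) :
    x k - (x 1 + x 2 - x k) ≤ |x 1 - x 2| := by
  fin_cases k
  · exact absurd rfl hk
  all_goals simp only [Fin.reduceFinMk, Fin.isValue]
  · linarith [le_abs_self (x 1 - x 2)]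
  · linarith [neg_abs_le (x 1 - x 2)]

lemma lt_add_div_two_of_lt_abs_sub {a q r c : ℚ} (hq : a ≤ q + c) (hr : a ≤ r + c)
    (hgap : 2 * c < |q - r|) : a < (q + r) / 2 := by
  rcases lt_abs.mp hgap with h | h <;> linarith

section Reduction

variable {m : ℕ} {T : ℤ} {b : Fin m → ℤ} {A : Fin 3 → Finset (Fin m ⊕ Fin 2)}

lemma pos_of_sum_eq_two_mul (hm : 0 < m) (hb : ∀ j, 0 < b j) (hsum : ∑ j, b j = 2 * T) :
    0 < T := by
  have := sum_pos (fun j _ => hb j) (univ_nonempty_iff.mpr ⟨⟨0, hm⟩⟩)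
  omega

@[simp] lemma vRed_zero_inl (j : Fin m) : vRed m T b 0 (.inl j) = T := rfl

@[simp] lemma vRed_zero_inr_zero : vRed m T b 0 (.inr 0) = 4 * T := rfl

@[simp] lemma vRed_zero_inr_one : vRed m T b 0 (.inr 1) = T := rfl

@[simp] lemma vRed_one_inl (j : Fin m) : vRed m T b 1 (.inl j) = b j := rfl

@[simp] lemma vRed_one_inr_zero : vRed m T b 1 (.inr 0) = 5 * T := rfl

@[simp] lemma vRed_one_inr_one : vRed m T b 1 (.inr 1) = ((m : ℚ) - 2) * T := rfl

lemma vRed_eq_one_of_ne_zero {i : Fin 3} (hi : i ≠ 0) : vRed m T b i = vRed m T b 1 := by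
  funext g
  match g with
  | .inl _ | .inr 0 | .inr 1 => simp [vRed, hi]

lemma vRed_zero_le_of_ne : ∀ {g : Fin m ⊕ Fin 2}, g ≠ .inr 0 → vRed m T b 0 g ≤ T
  | .inl _, _ | .inr 1, _ => le_rfl
  | .inr 0, hg => absurd rfl hg

lemma vRed_zero_le (hT : 0 ≤ T) (g : Fin m ⊕ Fin 2) : vRed m T b 0 g ≤ 4 * T := by
  have : (0 : ℚ) ≤ T := by exact_mod_cast hT
  by_cases hg : g = .inr 0
  · simp [hg]
  · linarith [vRed_zero_le_of_ne (T := T) (b := b) hg]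

lemma vRed_zero_nonneg (hT : 0 ≤ T) : ∀ g : Fin m ⊕ Fin 2, 0 ≤ vRed m T b 0 g
  | .inl _ | .inr 0 | .inr 1 => by simpa using hT

lemma vRed_one_nonneg (hm : 2 ≤ m) (hT : 0 ≤ T) (hb : ∀ j, 0 ≤ b j) :
    ∀ g : Fin m ⊕ Fin 2, 0 ≤ vRed m T b 1 g
  | .inl j => by simpa using hb j
  | .inr 0 => by simpa using hT
  | .inr 1 => mul_nonneg (sub_nonneg.mpr (by exact_mod_cast hm)) (by exact_mod_cast hT)

lemma sum_vRed_one (hsum : ∑ j, b j = 2 * T) :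
    ∑ g, vRed m T b 1 g = ((m : ℚ) + 5) * T := by
  have : ∑ j, (b j : ℚ) = 2 * T := by exact_mod_cast hsum
  simp only [Fintype.sum_sum_type, vRed_one_inl, Fin.sum_univ_two, vRed_one_inr_zero,
    vRed_one_inr_one, this]
  ring

lemma bundleVal_vRed_one_eq_sum {S : Finset (Fin m ⊕ Fin 2)} (h0 : .inr 0 ∉ S)
    (h1 : .inr 1 ∉ S) : bundleVal (vRed m T b 1) S = ((∑ j ∈ S.toLeft, b j : ℤ) : ℚ) := by
  have : S.toRight = ∅ := by
    ext j
    fin_cases j <;> simp [h0, h1]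
  simp [bundleVal, sum_sum_eq_sum_toLeft_add_sum_toRight, this]

lemma bundleVal_vRed_one_add (hsum : ∑ j, b j = 2 * T) (hA : isPartition A) :
    bundleVal (vRed m T b 1) (A 0) + bundleVal (vRed m T b 1) (A 1)
      + bundleVal (vRed m T b 1) (A 2) = ((m : ℚ) + 5) * T := by
  rw [← Fin.sum_univ_three (f := fun i => bundleVal (vRed m T b 1) (A i)), hA.sum_bundleVal,
    sum_vRed_one hsum]

lemma EQ1.bundleVal_vRed_zero_le (heq1 : EQ1 (vRed m T b) A) (hm : 2 ≤ m) (hT : 0 ≤ T)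
    (hb : ∀ j, 0 ≤ b j) {c : ℚ} (hc : ∀ g ∈ A 0, vRed m T b 0 g ≤ c) (hc0 : 0 ≤ c)
    {i : Fin 3} (hi : i ≠ 0) :
    bundleVal (vRed m T b 0) (A 0) ≤ bundleVal (vRed m T b 1) (A i) + c := by
  have h := heq1.bundleVal_le_add (j := i) hc hc0
  rw [vRed_eq_one_of_ne_zero hi] at h
  exact h (vRed_one_nonneg hm hT hb)

lemma inr_zero_notMem_of_inr_one_mem (hm : 2 ≤ m) (hT : 0 ≤ T) (hb : ∀ j, 0 ≤ b j)
    (hsum : ∑ j, b j = 2 * T) (hno : ∀ s : Finset (Fin m), ∑ j ∈ s, b j ≠ T)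
    (hA : isPartition A) (heq1 : EQ1 (vRed m T b) A) (h1 : .inr 1 ∈ A 0) : .inr 0 ∉ A 0 := by
  intro h0
  have hv0 : 5 * (T : ℚ) ≤ bundleVal (vRed m T b 0) (A 0) := by
    have := add_le_bundleVal_of_mem (vRed_zero_nonneg (b := b) hT) (by simp) h0 h1
    simp only [vRed_zero_inr_zero, vRed_zero_inr_one] at this
    linarith
  have hT4 : (0 : ℚ) ≤ 4 * T := by positivity
  have hbound (i : Fin 3) (hi : i ≠ 0) := heq1.bundleVal_vRed_zero_le hm hT hb
    (fun g _ => vRed_zero_le hT g) hT4 hi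
  have hx0 := add_le_bundleVal_of_mem (vRed_one_nonneg hm hT hb) (by simp) h0 h1
  simp only [vRed_one_inr_zero, vRed_one_inr_one] at hx0
  have hx1 : bundleVal (vRed m T b 1) (A 1) = T := by
    linarith [hbound 1 (by decide), hbound 2 (by decide), bundleVal_vRed_one_add hsum hA]
  rw [bundleVal_vRed_one_eq_sum (hA.notMem_of_mem h0 (by decide))
    (hA.notMem_of_mem h1 (by decide))] at hx1
  exact hno _ (by exact_mod_cast hx1)

end Reduction

/-- if no subset of indices has `b`-sum exactly `T` (a `no`
instance of 2-partition), then every EQ1 allocation `A` of the reduced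
instance satisfies `v₁(A₁) < (v₂(A₂) + v₃(A₃))/2`. -/
theorem stmt5 (m : ℕ) (hm : 20 ≤ m) (T : ℤ) (b : Fin m → ℤ)
    (hb : ∀ i, 0 < b i) (hsum : ∑ i, b i = 2 * T)
    (hno : ∀ s : Finset (Fin m), ∑ i ∈ s, b i ≠ T)
    (A : Fin 3 → Finset (Fin m ⊕ Fin 2))
    (hpart : isPartition A) (heq1 : EQ1 (vRed m T b) A) :
    bundleVal (vRed m T b 0) (A 0)
      < (bundleVal (vRed m T b 1) (A 1) + bundleVal (vRed m T b 2) (A 2)) / 2 := by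
  have hT := pos_of_sum_eq_two_mul (by omega) hb hsum
  have hTq : (0 : ℚ) < T := by exact_mod_cast hT
  have hmT : 20 * (T : ℚ) ≤ m * T := by gcongr; exact_mod_cast hm
  have hb' : ∀ j, 0 ≤ b j := fun j => (hb j).le
  have hw := vRed_one_nonneg (by omega) hT.le hb'
  have htot := bundleVal_vRed_one_add hsum hpart
  have hbound {c : ℚ} (hc : ∀ g ∈ A 0, vRed m T b 0 g ≤ c) (hc0 : 0 ≤ c) :=
    lt_add_div_two_of_lt_abs_sub
      (heq1.bundleVal_vRed_zero_le (by omega) hT.le hb' hc hc0 (i := 1) (by decide))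
      (heq1.bundleVal_vRed_zero_le (by omega) hT.le hb' hc hc0 (i := 2) (by decide))
  rw [vRed_eq_one_of_ne_zero (i := 2) (by decide)]
  obtain ⟨j, hj⟩ := hpart.exists_mem (.inr 1)
  have hxj := le_bundleVal_of_mem hw hj
  by_cases hj0 : j = 0
  · subst hj0
    have hd1 := inr_zero_notMem_of_inr_one_mem (by omega) hT.le hb' hsum hno hpart heq1 hj
    obtain ⟨k, hk⟩ := hpart.exists_mem (.inr 0)
    have hk0 : k ≠ 0 := by rintro rfl; exact hd1 hk
    apply hbound (fun g hg => vRed_zero_le_of_ne (ne_of_mem_of_not_mem hg hd1)) hTq.le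
    have hgap := sub_le_abs_sub_of_ne_zero (fun i => bundleVal (vRed m T b 1) (A i)) hk0
    have hxk := le_bundleVal_of_mem hw hk
    simp only [vRed_one_inr_zero, vRed_one_inr_one] at hgap hxk hxj
    linarith
  · apply hbound (fun g _ => vRed_zero_le hT.le g) (by positivity)
    have hgap := sub_le_abs_sub_of_ne_zero (fun i => bundleVal (vRed m T b 1) (A i)) hj0
    have hx0 := bundleVal_nonneg hw (A 0)
    simp only [vRed_one_inr_one] at hgap hxj
    linarith
end

section
/- Let S = {b_1,...,b_m} with m = 3k positive integers summing to kT, and suppose [m] partitions into k disjoint subsets S_1,...,S_k each with b-sum T. In the (k+1)-agent instance with goods g_1,...,g_m, d_1, d_2, where agent 0 values each g_j at (2m/3)T, d_1 at T, d_2 at (m/3 - 1)T, and each agent i in [k] values g_j at b_j and d_1, d_2 at (m^2/3)T each: for each 0 <= i <= k define the allocation A^i that gives agent j the goods indexed by S_j for each j in [k], gives d_1 to agent 0, and gives d_2 to agent i. Then each A^i is an EQ1 allocation. -/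
/-!
Take `T` as a common threshold. In `A^i` every agent values its own bundle at least `T`:
agent `0` holds `d₁`, worth `T` to it, agent `j ∈ [k]` holds `S_j`, worth `T` to it, and the
holder of `d₂` only gains. Conversely every bundle loses enough by dropping one good: the holder
of `d₂` drops `d₂` and is back at `T`, anyone else drops any good of nonnegative value. Positivity
of the `b_j` makes `T > 0`, hence every `S_j` is nonempty and all values are nonnegative.
-/

open Finset

/-- Valuations of the strong-NP-hardness reduction (with `m = 3k`): agent 0 is
`none`, agents `1, …, k` are `some i`; goods are `g_1, …, g_m` (`Sum.inl`) plus
`d_1 = Sum.inr 0` and `d_2 = Sum.inr 1`.  Agent 0 values each `g_j` at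
`(2m/3)T = 2kT`, `d_1` at `T` and `d_2` at `(m/3 - 1)T = (k-1)T`; each agent
`i ∈ [k]` values `g_j` at `b_j` and `d_1, d_2` at `(m²/3)T = 3k²T`. -/
def vStrong (k : ℕ) (T : ℤ) (b : Fin (3 * k) → ℤ) :
    Option (Fin k) → (Fin (3 * k) ⊕ Fin 2) → ℚ :=
  fun i g =>
    match i, g with
    | none, Sum.inl _ => 2 * (k : ℚ) * (T : ℚ)
    | none, Sum.inr 0 => (T : ℚ)
    | none, Sum.inr 1 => ((k : ℚ) - 1) * (T : ℚ)
    | some _, Sum.inl j => (b j : ℚ)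
    | some _, Sum.inr _ => 3 * (k : ℚ) ^ 2 * (T : ℚ)

/-- The allocation `A^i`: each agent `j ∈ [k]` gets the goods indexed by
`S j`, agent 0 gets `d₁`, and agent `i` additionally gets `d₂`. -/
def strongAlloc {k : ℕ} (S : Fin k → Finset (Fin (3 * k))) (i : Option (Fin k)) :
    Option (Fin k) → Finset (Fin (3 * k) ⊕ Fin 2) :=
  fun a =>
    (match a with
      | none => {Sum.inr 0}
      | some j => (S j).image Sum.inl) ∪ (if a = i then {Sum.inr 1} else ∅)

section Allocation

variable {ι γ : Type*} [DecidableEq γ]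

theorem isPartition_iff_existsUnique [Fintype ι] [Fintype γ] {A : ι → Finset γ} :
    isPartition A ↔ ∀ x, ∃! i, x ∈ A i := by
  constructor
  · rintro ⟨hdisj, hcover⟩ x
    obtain ⟨i, -, hi⟩ := mem_biUnion.mp (hcover ▸ mem_univ x)
    refine ⟨i, hi, fun j hj => ?_⟩
    by_contra hji
    exact disjoint_left.mp (hdisj j i hji) hj hi
  · intro h
    refine ⟨fun i j hij => disjoint_left.mpr fun x hi hj => hij ?_, ?_⟩
    · exact (h x).unique hi hj
    · refine eq_univ_of_forall fun x => mem_biUnion.mpr ?_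
      obtain ⟨i, hi, -⟩ := h x
      exact ⟨i, mem_univ i, hi⟩

theorem bundleVal_erase_le {v : γ → ℚ} {B : Finset γ} {g : γ} (hg : g ∈ B) (hv : 0 ≤ v g) :
    bundleVal v (B.erase g) ≤ bundleVal v B := by
  rw [bundleVal, bundleVal, sum_erase_eq_sub hg]
  linarith

theorem EQ1_of_threshold {v : ι → γ → ℚ} {A : ι → Finset γ} (t : ℚ)
    (hlow : ∀ i, t ≤ bundleVal (v i) (A i))
    (hup : ∀ i, A i ≠ ∅ → ∃ g ∈ A i, bundleVal (v i) ((A i).erase g) ≤ t) :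
    EQ1 v A := fun i j hi => by
  obtain ⟨g, hg, hle⟩ := hup i hi
  exact ⟨g, hg, hle.trans (hlow j)⟩

theorem pos_of_sum_eq_natCast_mul [Fintype ι] [Nonempty ι] {b : ι → ℤ} (hb : ∀ i, 0 < b i)
    {k : ℕ} {T : ℤ} (hsum : ∑ i, b i = k * T) : 0 < T := by
  have hpos : 0 < ∑ i, b i := sum_pos (fun i _ => hb i) univ_nonempty
  rw [hsum] at hpos
  exact pos_of_mul_pos_right hpos (by positivity)

end Allocation

section StrongReduction

variable {k : ℕ} {T : ℤ} {b : Fin (3 * k) → ℤ} {S : Fin k → Finset (Fin (3 * k))}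

/-- The allocation `A^i` before `d₂` is handed out. -/
def strongBase (S : Fin k → Finset (Fin (3 * k))) :
    Option (Fin k) → Finset (Fin (3 * k) ⊕ Fin 2)
  | none => {Sum.inr 0}
  | some j => (S j).image Sum.inl

theorem strongAlloc_eq (i a : Option (Fin k)) :
    strongAlloc S i a = if a = i then insert (Sum.inr 1) (strongBase S a) else strongBase S a := by
  unfold strongAlloc
  split_ifs with h
  · rw [insert_eq, union_comm]
    cases a <;> rfl
  · rw [union_empty]
    cases a <;> rfl

theorem mem_strongAlloc {i a : Option (Fin k)} {x : Fin (3 * k) ⊕ Fin 2} :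
    x ∈ strongAlloc S i a ↔ x ∈ strongBase S a ∨ a = i ∧ x = Sum.inr 1 := by
  rw [strongAlloc_eq]
  split_ifs with h <;> simp [h, or_comm]

theorem inr_one_notMem_strongBase (a : Option (Fin k)) : Sum.inr 1 ∉ strongBase S a := by
  cases a <;> simp [strongBase]

theorem isPartition_strongAlloc (hS : isPartition S) (i : Option (Fin k)) :
    isPartition (strongAlloc S i) := by
  rw [isPartition_iff_existsUnique] at hS ⊢
  rintro (g | d)
  · obtain ⟨j, hj, huniq⟩ := hS g
    refine ⟨some j, mem_strongAlloc.mpr (.inl (mem_image_of_mem _ hj)), ?_⟩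
    rintro (_ | j') h
    · simp [mem_strongAlloc, strongBase] at h
    · rw [huniq j' (by simpa [mem_strongAlloc, strongBase] using h)]
  · fin_cases d
    · refine ⟨none, mem_strongAlloc.mpr (.inl (mem_singleton_self _)), ?_⟩
      rintro (_ | j') h
      · rfl
      · simp [mem_strongAlloc, strongBase] at h
    · refine ⟨i, mem_strongAlloc.mpr (.inr ⟨rfl, rfl⟩), fun a h => ?_⟩
      simpa [mem_strongAlloc, inr_one_notMem_strongBase] using h

theorem bundleVal_strongBase (hS : ∀ j, ∑ x ∈ S j, b x = T) (a : Option (Fin k)) :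
    bundleVal (vStrong k T b a) (strongBase S a) = T := by
  cases a with
  | none => simp [bundleVal, strongBase, vStrong]
  | some j =>
    rw [bundleVal, strongBase, sum_image fun _ _ _ _ h => Sum.inl.inj h, ← hS j]
    push_cast
    rfl

theorem exists_mem_strongBase_nonneg (hT : 0 < T) (hb : ∀ x, 0 ≤ b x)
    (hS : ∀ j, ∑ x ∈ S j, b x = T) (a : Option (Fin k)) :
    ∃ g ∈ strongBase S a, 0 ≤ vStrong k T b a g := by
  cases a with
  | none => exact ⟨Sum.inr 0, mem_singleton_self _, by simpa [vStrong] using hT.le⟩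
  | some j =>
    obtain ⟨g, hg⟩ : (S j).Nonempty := by
      rw [nonempty_iff_ne_empty]
      rintro hempty
      have := hS j
      rw [hempty, sum_empty] at this
      exact hT.ne this
    exact ⟨Sum.inl g, mem_image_of_mem _ hg, by simpa [vStrong] using hb g⟩

theorem vStrong_inr_one_nonneg (hk : 0 < k) (hT : 0 ≤ T) (a : Option (Fin k)) :
    0 ≤ vStrong k T b a (Sum.inr 1) := by
  have hk' : (1 : ℚ) ≤ k := by exact_mod_cast hk
  have hT' : (0 : ℚ) ≤ T := by exact_mod_cast hT
  cases a with
  | none => exact mul_nonneg (by linarith) hT'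
  | some _ => exact mul_nonneg (by positivity) hT'

theorem strongAlloc_threshold (hk : 0 < k) (hT : 0 < T) (hb : ∀ x, 0 ≤ b x)
    (hS : ∀ j, ∑ x ∈ S j, b x = T) (i a : Option (Fin k)) :
    (T : ℚ) ≤ bundleVal (vStrong k T b a) (strongAlloc S i a) ∧
      ∃ g ∈ strongAlloc S i a,
        bundleVal (vStrong k T b a) ((strongAlloc S i a).erase g) ≤ T := by
  have hbase := bundleVal_strongBase (b := b) hS a
  rw [strongAlloc_eq]
  split_ifs
  · have hd := inr_one_notMem_strongBase (S := S) a
    refine ⟨?_, Sum.inr 1, mem_insert_self _ _, by rw [erase_insert hd, hbase]⟩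
    rw [bundleVal, sum_insert hd, ← bundleVal, hbase]
    linarith [vStrong_inr_one_nonneg (b := b) hk hT.le a]
  · obtain ⟨g, hg, hv⟩ := exists_mem_strongBase_nonneg hT hb hS a
    exact ⟨hbase.ge, g, hg, (bundleVal_erase_le hg hv).trans_eq hbase⟩

end StrongReduction

/-- in a `yes` instance of 3-partition, each allocation `A^i` is
an EQ1 allocation. -/
theorem stmt6 (k : ℕ) (hk : 0 < k) (T : ℤ) (b : Fin (3 * k) → ℤ)
    (hb : ∀ i, 0 < b i) (hsum : ∑ i, b i = k * T)
    (S : Fin k → Finset (Fin (3 * k)))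
    (hdisj : ∀ j j', j ≠ j' → Disjoint (S j) (S j'))
    (hcover : Finset.univ.biUnion S = Finset.univ)
    (hS : ∀ j, ∑ i ∈ S j, b i = T) :
    ∀ i : Option (Fin k),
      isPartition (strongAlloc S i) ∧ EQ1 (vStrong k T b) (strongAlloc S i) := by
  intro i
  have : Nonempty (Fin (3 * k)) := ⟨⟨0, by omega⟩⟩
  have hT := pos_of_sum_eq_natCast_mul hb hsum
  have hthreshold := strongAlloc_threshold hk hT (fun x => (hb x).le) hS i
  exact ⟨isPartition_strongAlloc ⟨hdisj, hcover⟩ i,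
    EQ1_of_threshold T (fun a => (hthreshold a).1) (fun a _ => (hthreshold a).2)⟩
end

section
/- In the 3-agent, 3-good instance with valuations v_1 = (9, 6, 6), v_2 = (1, 10, 10), v_3 = (7, 7, 7), every EQ1 allocation assigns exactly one good to each agent. -/
/-!
All values in the instance are positive. Hence an agent holding two or more goods still has
positive value after giving one up, so EQ1 rules out such an agent as long as some other agent
holds nothing. Since there are as many goods as agents, either some agent is empty (and then
everybody holds at most one good) or nobody is; in both cases the bundle sizes, which add up
to the number of agents, must all be one.
-/

open Finset

/-- The instance of Fig. 5. -/
def vFig5 : Fin 3 → Fin 3 → ℚ := ![![9, 6, 6], ![1, 10, 10], ![7, 7, 7]]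

theorem isPartition.sum_card {ι γ : Type*} [Fintype ι] [Fintype γ] [DecidableEq γ]
    {A : ι → Finset γ} (hA : isPartition A) : ∑ i, (A i).card = Fintype.card γ := by
  rw [← card_univ, ← hA.2, card_biUnion]
  exact fun i _ j _ hij => hA.1 i j hij

theorem eq_one_of_sum_eq_card {ι : Type*} [Fintype ι] {f : ι → ℕ}
    (hsum : ∑ i, f i = Fintype.card ι) (hf : (∀ i, f i ≤ 1) ∨ ∀ i, 1 ≤ f i) (i : ι) :
    f i = 1 := by
  have hcard : Fintype.card ι = ∑ _i : ι, 1 := by simp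
  rcases hf with hle | hge
  · exact (sum_eq_sum_iff_of_le fun i _ => hle i).1 (hsum.trans hcard) i (mem_univ i)
  · exact ((sum_eq_sum_iff_of_le fun i _ => hge i).1 (hcard.symm.trans hsum.symm) i
      (mem_univ i)).symm

theorem bundleVal_pos {γ : Type*} {v : γ → ℚ} (hv : ∀ g, 0 < v g) {S : Finset γ}
    (hS : S.Nonempty) : 0 < bundleVal v S :=
  sum_pos (fun g _ => hv g) hS

theorem EQ1.card_le_one_of_eq_empty {ι γ : Type*} [DecidableEq γ] {v : ι → γ → ℚ}
    {A : ι → Finset γ} (hA : EQ1 v A) (hv : ∀ i g, 0 < v i g) {i j : ι} (hj : A j = ∅) :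
    (A i).card ≤ 1 := by
  by_contra! hcard
  obtain ⟨g, hg, hle⟩ := hA i j (by rintro h; simp [h] at hcard)
  have hrest : ((A i).erase g).Nonempty := by
    rw [← card_pos, card_erase_of_mem hg]; omega
  have hpos := bundleVal_pos (hv i) hrest
  rw [hj] at hle
  exact hpos.not_ge (hle.trans_eq sum_empty)

theorem EQ1.card_eq_one_of_pos {ι γ : Type*} [Fintype ι] [Fintype γ] [DecidableEq γ]
    {v : ι → γ → ℚ} {A : ι → Finset γ} (hA : EQ1 v A) (hpart : isPartition A)
    (hv : ∀ i g, 0 < v i g) (hcard : Fintype.card γ = Fintype.card ι) (i : ι) :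
    (A i).card = 1 := by
  refine eq_one_of_sum_eq_card (hpart.sum_card.trans hcard) ?_ i
  by_cases hempty : ∃ j, A j = ∅
  · obtain ⟨j, hj⟩ := hempty
    exact Or.inl fun i => hA.card_le_one_of_eq_empty hv hj
  · exact Or.inr fun i => card_pos.2 (nonempty_iff_ne_empty.2 fun h => hempty ⟨i, h⟩)

theorem vFig5_pos (i g : Fin 3) : 0 < vFig5 i g := by
  fin_cases i <;> fin_cases g <;> norm_num [vFig5]

/-- in the instance of Fig. 5, every EQ1 allocation assigns
exactly one good to each agent. -/
theorem stmt10 (A : Fin 3 → Finset (Fin 3)) (hpart : isPartition A)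
    (heq1 : EQ1 vFig5 A) : ∀ i, (A i).card = 1 :=
  heq1.card_eq_one_of_pos hpart vFig5_pos rfl
end
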